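/- Let G be a 3-γc-vertex critical graph, let W be a set of vertices inducing a maximum complete subgraph of G, let I be an independent set of G, and let w ∈ W. Then every minimum connected dominating set D of G − w satisfies D ∩ W = ∅ and |D ∩ I| ≤ 1. -/

import Mathlib

open Finset

variable {V : Type*}

/-- `D` is a connected dominating set of `G`: every vertex is in `D` or adjacent to a
vertex of `D`, and the subgraph induced by `D` is connected. -/
def IsConnDomSet (G : SimpleGraph V) (D : Set V) : Prop :=
  (∀ v : V, v ∈ D ∨ ∃ u ∈ D, G.Adj u v) ∧ (G.induce D).Connected

/-- The connected domination number `γc(G)`. -/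
noncomputable def gammaC (G : SimpleGraph V) [Fintype V] : ℕ :=
  sInf {k | ∃ D : Finset V, D.card = k ∧ IsConnDomSet G ↑D}

/-- The independence number `α(G)`. -/
noncomputable def alpha (G : SimpleGraph V) [Fintype V] : ℕ :=
  sSup {k | ∃ I : Finset V, I.card = k ∧ (↑I : Set V).Pairwise fun u v => ¬ G.Adj u v}

/-- The clique number `ω(G)`. -/
noncomputable def omegaNum (G : SimpleGraph V) [Fintype V] : ℕ :=
  sSup {k | ∃ W : Finset V, W.card = k ∧ (↑W : Set V).Pairwise G.Adj}

/-- The minimum degree `δ(G)`. -/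
noncomputable def minDeg (G : SimpleGraph V) [Fintype V] : ℕ :=
  sInf {k | ∃ v : V, (G.neighborSet v).ncard = k}

/-- The vertex connectivity `κ(G)`: the minimum size of a set of vertices whose
deletion leaves a graph that is disconnected or has at most one vertex
(so `κ = n - 1` for the complete graph on `n` vertices). -/
noncomputable def kappa (G : SimpleGraph V) [Fintype V] : ℕ :=
  sInf {k | ∃ S : Finset V, S.card = k ∧
    (¬ (G.induce (↑S : Set V)ᶜ).Connected ∨ ((↑S : Set V)ᶜ).Subsingleton)}

/-- `G` is `3`-`γc`-edge critical: `γc(G) = 3` and adding any missing edge decreases `γc`. -/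
def EdgeCritical3 (G : SimpleGraph V) [Fintype V] : Prop :=
  gammaC G = 3 ∧ ∀ u v : V, u ≠ v → ¬ G.Adj u v →
    gammaC (G ⊔ SimpleGraph.fromEdgeSet {s(u, v)}) < 3

/-- `G` is `3`-`γc`-vertex critical: `G` is `2`-connected, `γc(G) = 3` and deleting any
vertex decreases `γc`. -/
def VertexCritical3 (G : SimpleGraph V) [Fintype V] [DecidableEq V] : Prop :=
  2 ≤ kappa G ∧ gammaC G = 3 ∧ ∀ v : V, gammaC (G.induce {w | w ≠ v}) < 3

/-- `G` is maximal `3`-`γc`-vertex critical. -/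
def MaximalVertexCritical3 (G : SimpleGraph V) [Fintype V] [DecidableEq V] : Prop :=
  EdgeCritical3 G ∧ VertexCritical3 G

/-- `D` is a connected dominating set of the vertex-deleted graph `G - w`. -/
def IsConnDomSetAvoiding (G : SimpleGraph V) (D : Set V) (w : V) : Prop :=
  w ∉ D ∧ (∀ v : V, v ≠ w → v ∈ D ∨ ∃ u ∈ D, G.Adj u v) ∧ (G.induce D).Connected

/-!
Deleting a vertex of a `3`-`γc`-vertex critical graph leaves connected domination number at
most `2`, so a minimum connected dominating set `D` of `G - w` has at most two vertices. If `D`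
contained a neighbour of `w` (for instance a vertex of a clique through `w`), it would dominate
`G` itself, contradicting `γc(G) = 3`. And a connected set of at most two vertices is a single
vertex or an edge, so it meets an independent set at most once.
-/

lemma SimpleGraph.adj_of_induce_pair_connected (G : SimpleGraph V) {u v : V} (huv : u ≠ v)
    (h : (G.induce {u, v}).Connected) : G.Adj u v := by
  have : Nontrivial ({u, v} : Set V) := (Set.nontrivial_pair huv).coe_sort
  obtain ⟨⟨x, rfl | rfl⟩, hadj⟩ := h.preconnected.exists_adj_of_nontrivial ⟨u, by simp⟩
  · exact absurd rfl hadj.ne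
  · exact hadj

lemma gammaC_le_card {G : SimpleGraph V} [Fintype V] {D : Finset V}
    (hD : IsConnDomSet G ↑D) : gammaC G ≤ D.card :=
  Nat.sInf_le ⟨D, rfl, hD⟩

lemma IsConnDomSetAvoiding.isConnDomSet {G : SimpleGraph V} {D : Set V} {w u : V}
    (hD : IsConnDomSetAvoiding G D w) (hu : u ∈ D) (huw : G.Adj u w) : IsConnDomSet G D := by
  refine ⟨fun v => ?_, hD.2.2⟩
  by_cases hv : v = w
  · exact Or.inr ⟨u, hu, hv ▸ huw⟩
  · exact hD.2.1 v hv

lemma IsConnDomSetAvoiding.not_adj_of_card_lt {G : SimpleGraph V} [Fintype V] {D : Finset V}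
    {w u : V} (hD : IsConnDomSetAvoiding G ↑D w) (hcard : D.card < gammaC G) (hu : u ∈ D) :
    ¬ G.Adj u w := fun huw =>
  (gammaC_le_card (hD.isConnDomSet (mem_coe.2 hu) huw)).not_gt hcard

lemma card_inter_le_one_of_induce_connected {G : SimpleGraph V} [DecidableEq V] {D I : Finset V}
    (hconn : (G.induce ↑D).Connected) (hcard : D.card ≤ 2)
    (hI : (↑I : Set V).Pairwise fun u v => ¬ G.Adj u v) : (D ∩ I).card ≤ 1 := by
  by_contra! hDI
  obtain ⟨u, hu, v, hv, huv⟩ := one_lt_card.mp hDI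
  rw [mem_inter] at hu hv
  have hD : D = {u, v} :=
    (eq_of_subset_of_card_le (insert_subset hu.1 (singleton_subset_iff.2 hv.1))
      (by rw [card_pair huv]; exact hcard)).symm
  rw [hD, coe_pair] at hconn
  exact hI hu.2 hv.2 huv (G.adj_of_induce_pair_connected huv hconn)

theorem stmt_5_general (G : SimpleGraph V) [Fintype V] [DecidableEq V]
    (h : VertexCritical3 G)
    (W : Finset V) (hWcl : (↑W : Set V).Pairwise G.Adj)
    (I : Finset V) (hIind : (↑I : Set V).Pairwise fun u v => ¬ G.Adj u v)
    (w : V) (hw : w ∈ W)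
    (D : Finset V) (hD : IsConnDomSetAvoiding G ↑D w)
    (hDmin : D.card = gammaC (G.induce {u | u ≠ w})) :
    D ∩ W = ∅ ∧ (D ∩ I).card ≤ 1 := by
  obtain ⟨-, hγ, hcrit⟩ := h
  have hcard : D.card ≤ 2 := by have := hcrit w; omega
  refine ⟨eq_empty_of_forall_notMem fun u hu => ?_,
    card_inter_le_one_of_induce_connected hD.2.2 hcard hIind⟩
  rw [mem_inter] at hu
  have huw : u ≠ w := by rintro rfl; exact hD.1 hu.1
  exact hD.not_adj_of_card_lt (by omega) hu.1 (hWcl hu.2 hw huw)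

/-- let `G` be `3`-`γc`-vertex critical, `W` a maximum clique, `I` an
independent set and `w ∈ W`.  Then every minimum connected dominating set `D` of
`G - w` satisfies `D ∩ W = ∅` and `|D ∩ I| ≤ 1`. -/
theorem stmt_5 (G : SimpleGraph V) [Fintype V] [DecidableEq V]
    (h : VertexCritical3 G)
    (W : Finset V) (hWcl : (↑W : Set V).Pairwise G.Adj) (hWcard : W.card = omegaNum G)
    (I : Finset V) (hIind : (↑I : Set V).Pairwise fun u v => ¬ G.Adj u v)
    (w : V) (hw : w ∈ W)
    (D : Finset V) (hD : IsConnDomSetAvoiding G ↑D w)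
    (hDmin : D.card = gammaC (G.induce {u | u ≠ w})) :
    D ∩ W = ∅ ∧ (D ∩ I).card ≤ 1 :=
  stmt_5_general G h W hWcl I hIind w hw D hD hDmin
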